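/- Fix a = (a⁰,a¹,a²,a³) ∈ ℂ⁴ and κ ∈ ℂ with κ ≠ 0. On A = ℂ[x⁰,x¹,x²,x³] define the operators X̂^μ := x^μ + (i a^μ/κ)·Σ_{λ=0}^{3} x^λ∘∂_λ (equivalently X̂^μ = x^μ − (a^μ/κ) x^λ p_λ with p_λ = −i∂_λ). Then for all μ, ν ∈ {0,1,2,3}: [X̂^μ, X̂^ν] = (i/κ)(a^μ X̂^ν − a^ν X̂^μ). -/

import Mathlib

/-!
The operator `E = Σ_λ x^λ ∂_λ` is the Euler derivation, so `[E, x^μ] = E(x^μ) = x^μ`, while the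
multiplication operators `x^μ` commute with each other. Writing `X̂^μ = x^μ + c a^μ E` with
`c = i/κ`, bilinearity gives `[X̂^μ, X̂^ν] = c (a^μ x^ν - a^ν x^μ)`, and on the right-hand side
the two `E`-terms `c² a^μ a^ν E` cancel.
-/

open MvPolynomial

noncomputable section

/-- The multiplication-by-`x^μ` operator on `ℂ[x⁰,x¹,x²,x³]`. -/
def Xop (μ : Fin 4) : Module.End ℂ (MvPolynomial (Fin 4) ℂ) :=
  LinearMap.mulLeft ℂ (X μ)

/-- The partial-derivative operator `∂_μ` on `ℂ[x⁰,x¹,x²,x³]`. -/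
def Dop (μ : Fin 4) : Module.End ℂ (MvPolynomial (Fin 4) ℂ) :=
  (pderiv μ).toLinearMap

/-- The Magueijo–Smolin operator `X̂^μ := x^μ + (i a^μ/κ)·Σ_{λ} x^λ∘∂_λ`. -/
def XhatMS (a : Fin 4 → ℂ) (κ : ℂ) (μ : Fin 4) : Module.End ℂ (MvPolynomial (Fin 4) ℂ) :=
  Xop μ + (Complex.I * a μ / κ) • ∑ lam : Fin 4, Xop lam * Dop lam

theorem commutator_add_smul_of_commute {R A : Type*} [CommSemiring R] [Ring A] [Algebra R A]
    {x y e : A} (s t : R) (hxy : Commute x y) (hx : e * x = x * e + x) (hy : e * y = y * e + y) :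
    (x + s • e) * (y + t • e) - (y + t • e) * (x + s • e) = s • y - t • x := by
  simp only [add_mul, mul_add, smul_mul_assoc, mul_smul_comm, hx, hy, hxy.eq, smul_add, smul_smul,
    mul_comm t s]
  abel

theorem Derivation.toLinearMap_mul_mulLeft {R A : Type*} [CommSemiring R] [CommSemiring A]
    [Algebra R A] (D : Derivation R A A) (p : A) :
    D.toLinearMap * LinearMap.mulLeft R p
      = LinearMap.mulLeft R p * D.toLinearMap + LinearMap.mulLeft R (D p) := by
  ext q
  simp [Derivation.leibniz, mul_comm]

namespace MvPolynomial

variable (σ R : Type*) [Fintype σ] [CommSemiring R]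

def eulerDerivation : Derivation R (MvPolynomial σ R) (MvPolynomial σ R) :=
  ∑ i : σ, (X i : MvPolynomial σ R) • pderiv i

variable {σ R}

theorem eulerDerivation_apply (p : MvPolynomial σ R) :
    eulerDerivation σ R p = ∑ i, X i * pderiv i p := by
  rw [eulerDerivation, ← Derivation.coeFnAddMonoidHom_apply, map_sum, Finset.sum_apply]
  rfl

theorem eulerDerivation_X (i : σ) : eulerDerivation σ R (X i) = X i := by
  classical
  simp [eulerDerivation_apply, pderiv_X, Pi.single_apply]

end MvPolynomial

theorem sum_Xop_mul_Dop :
    ∑ lam : Fin 4, Xop lam * Dop lam = (eulerDerivation (Fin 4) ℂ).toLinearMap := by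
  refine LinearMap.ext fun p => ?_
  simp [eulerDerivation_apply, Xop, Dop]

theorem Xop_commute (μ ν : Fin 4) : Commute (Xop μ) (Xop ν) := by
  ext p
  simp [Xop, mul_left_comm]

theorem eulerDerivation_mul_Xop (μ : Fin 4) :
    (eulerDerivation (Fin 4) ℂ).toLinearMap * Xop μ
      = Xop μ * (eulerDerivation (Fin 4) ℂ).toLinearMap + Xop μ := by
  rw [Xop, Derivation.toLinearMap_mul_mulLeft, eulerDerivation_X]

theorem magueijo_smolin_realization_general (a : Fin 4 → ℂ) (κ : ℂ) :
    ∀ μ ν : Fin 4,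
      XhatMS a κ μ * XhatMS a κ ν - XhatMS a κ ν * XhatMS a κ μ
        = (Complex.I / κ) • (a μ • XhatMS a κ ν - a ν • XhatMS a κ μ) := by
  intro μ ν
  simp only [XhatMS, sum_Xop_mul_Dop]
  rw [commutator_add_smul_of_commute _ _ (Xop_commute μ ν) (eulerDerivation_mul_Xop μ) (eulerDerivation_mul_Xop ν)]
  module

/-- The Magueijo–Smolin realization of the generalized κ-Minkowski relations:
`[X̂^μ, X̂^ν] = (i/κ)(a^μ X̂^ν − a^ν X̂^μ)` for an arbitrary fixed four-vector `a`. -/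
theorem magueijo_smolin_realization (a : Fin 4 → ℂ) (κ : ℂ) (hκ : κ ≠ 0) :
    ∀ μ ν : Fin 4,
      XhatMS a κ μ * XhatMS a κ ν - XhatMS a κ ν * XhatMS a κ μ
        = (Complex.I / κ) • (a μ • XhatMS a κ ν - a ν • XhatMS a κ μ) :=
  magueijo_smolin_realization_general a κ

end
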